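/- arXiv:2011.05371 — 6 statements merged into one kernel-verified Lean document; each statement's English description precedes it below -/
import Mathlib

section
/- Let G be a graph with no isolated vertex and H a nontrivial graph with domination number γ(H) = 1. Then the Italian domination number of the lexicographic product G∘H equals the (2,1,0)-domination number of G. -/
open scoped Classical
open Finset SimpleGraph

/-- A `w`-dominating function: `f : V → {0,…,l}` with `f(N(v)) ≥ w_{f(v)}` for all `v`. -/
def WDom {V : Type*} [Fintype V] (G : SimpleGraph V) {l : ℕ} (w : Fin (l+1) → ℕ)
    (f : V → Fin (l+1)) : Prop :=
  ∀ v, w (f v) ≤ ∑ u, if G.Adj v u then (f u : ℕ) else 0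

/-- The `w`-domination number. -/
noncomputable def gammaW {V : Type*} [Fintype V] (G : SimpleGraph V) {l : ℕ}
    (w : Fin (l+1) → ℕ) : ℕ :=
  sInf {n | ∃ f : V → Fin (l+1), WDom G w f ∧ ∑ v, (f v : ℕ) = n}

/-- The Italian domination number `γ_I = γ_{(2,0,0)}`. -/
noncomputable def gammaI {V : Type*} [Fintype V] (G : SimpleGraph V) : ℕ :=
  gammaW G ![2,0,0]

/-- The domination number. -/
noncomputable def gamma {V : Type*} [Fintype V] (G : SimpleGraph V) : ℕ :=
  sInf {n | ∃ S : Finset V, (∀ v, v ∈ S ∨ ∃ u ∈ S, G.Adj u v) ∧ S.card = n}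

/-- The total domination number. -/
noncomputable def gammaT {V : Type*} [Fintype V] (G : SimpleGraph V) : ℕ :=
  sInf {n | ∃ S : Finset V, (∀ v, ∃ u ∈ S, G.Adj u v) ∧ S.card = n}

/-- The 2-domination number. -/
noncomputable def gamma2 {V : Type*} [Fintype V] (G : SimpleGraph V) : ℕ :=
  sInf {n | ∃ S : Finset V, (∀ v ∉ S, 2 ≤ (S.filter (fun u => G.Adj u v)).card) ∧ S.card = n}

/-- The double domination number. -/
noncomputable def gammaX2 {V : Type*} [Fintype V] (G : SimpleGraph V) : ℕ :=
  sInf {n | ∃ S : Finset V, (∀ v, 2 ≤ (S.filter (fun u => u = v ∨ G.Adj u v)).card) ∧ S.card = n}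

/-- The double total domination number. -/
noncomputable def gammaX2T {V : Type*} [Fintype V] (G : SimpleGraph V) : ℕ :=
  sInf {n | ∃ S : Finset V, (∀ v, 2 ≤ (S.filter (fun u => G.Adj u v)).card) ∧ S.card = n}

/-- The lexicographic product `G ∘ H`. -/
def lexProd {V W : Type*} (G : SimpleGraph V) (H : SimpleGraph W) : SimpleGraph (V × W) where
  Adj x y := G.Adj x.1 y.1 ∨ (x.1 = y.1 ∧ H.Adj x.2 y.2)
  symm := by
    constructor
    rintro x y (h | ⟨h1, h2⟩)
    · exact Or.inl h.symm
    · exact Or.inr ⟨h1.symm, h2.symm⟩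
  loopless := by
    constructor
    rintro x (h | ⟨_, h⟩)
    · exact G.irrefl h
    · exact H.irrefl h

/-!
Collapsing each `H`-fibre `{v} × W` of an Italian dominating function `f` of `G ∘ H` to
`min 2 (∑ y, f (v, y))` gives a `(2,1,0)`-dominating function of `G`: a fibre of weight at most
one contains a vertex of weight zero (as `H` is nontrivial), which must collect weight two from the
other fibres over neighbours of `v` and from its own fibre. Conversely, a `(2,1,0)`-dominating
function of `G` placed on the fibre copies of a dominating vertex of `H` is Italian dominating on
`G ∘ H`, since every other vertex of a fibre sees the weight of its own fibre as well.
-/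

universe u v

section

variable {V : Type u} {W : Type v} [Fintype V] [Fintype W]

noncomputable def neighborSum (G : SimpleGraph V) (f : V → ℕ) (v : V) : ℕ :=
  ∑ u, if G.Adj v u then f u else 0

lemma neighborSum_le_sum (G : SimpleGraph V) (f : V → ℕ) (v : V) :
    neighborSum G f v ≤ ∑ u, f u :=
  sum_le_sum fun u _ => by split_ifs <;> simp

lemma min_neighborSum_le (G : SimpleGraph V) (c : ℕ) (f : V → ℕ) (v : V) :
    min c (neighborSum G f v) ≤ neighborSum G (fun u => min c (f u)) v := by
  refine (le_sum_of_subadditive (min c) (by simp) (fun a b => ?_) _ _).trans_eq ?_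
  · omega
  · exact sum_congr rfl fun u _ => by split_ifs <;> simp

lemma neighborSum_lexProd (G : SimpleGraph V) (H : SimpleGraph W) (f : V × W → ℕ)
    (v : V) (w : W) :
    neighborSum (lexProd G H) f (v, w) =
      neighborSum G (fun u => ∑ y, f (u, y)) v + neighborSum H (fun y => f (v, y)) w := by
  have hsplit : ∀ u y, (if (lexProd G H).Adj (v, w) (u, y) then f (u, y) else 0) =
      (if G.Adj v u then f (u, y) else 0) + if v = u ∧ H.Adj w y then f (u, y) else 0 := by
    intro u y
    by_cases huv : v = u
    · subst huv; simp [lexProd]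
    · simp [lexProd, huv]
  simp only [neighborSum, Fintype.sum_prod_type, hsplit, sum_add_distrib, ite_and]
  simp [sum_ite_irrel]

lemma exists_wDom_sum_eq_gammaW {l : ℕ} (G : SimpleGraph V) (w : Fin (l + 1) → ℕ)
    (hw : w (Fin.last l) = 0) : ∃ f, WDom G w f ∧ ∑ v, (f v : ℕ) = gammaW G w :=
  Nat.sInf_mem (s := {n | ∃ f : V → Fin (l + 1), WDom G w f ∧ ∑ v, (f v : ℕ) = n})
    ⟨_, fun _ => Fin.last l, fun v => by simp [hw], rfl⟩

lemma gammaW_le_sum {l : ℕ} {G : SimpleGraph V} {w : Fin (l + 1) → ℕ} {f : V → Fin (l + 1)}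
    (hf : WDom G w f) : gammaW G w ≤ ∑ v, (f v : ℕ) := by
  unfold gammaW
  exact Nat.sInf_le ⟨f, hf, rfl⟩

lemma exists_forall_eq_or_adj_of_gamma_eq_one {H : SimpleGraph W} (hH : gamma H = 1) :
    ∃ w₀, ∀ y, y = w₀ ∨ H.Adj w₀ y := by
  obtain ⟨S, hS, hcard⟩ : gamma H ∈
      {n | ∃ S : Finset W, (∀ v, v ∈ S ∨ ∃ u ∈ S, H.Adj u v) ∧ S.card = n} := by
    unfold gamma
    exact Nat.sInf_mem ⟨_, univ, fun v => Or.inl (mem_univ v), rfl⟩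
  obtain ⟨w₀, rfl⟩ := card_eq_one.mp (hcard.trans hH)
  exact ⟨w₀, fun y => by simpa using hS y⟩

lemma exists_eq_zero_of_sum_le_one [Nontrivial W] {f : W → ℕ} (hf : ∑ y, f y ≤ 1) :
    ∃ y, f y = 0 := by
  obtain ⟨a, b, hab⟩ := exists_pair_ne W
  have : f a + f b ≤ ∑ y, f y := by
    simpa [sum_pair hab] using sum_le_sum_of_subset (f := f) (subset_univ {a, b})
  exact if ha : f a = 0 then ⟨a, ha⟩ else ⟨b, by omega⟩

variable {G : SimpleGraph V} {H : SimpleGraph W}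

lemma wDom_lexProd_of_wDom {w₀ : W} (hw₀ : ∀ y, y = w₀ ∨ H.Adj w₀ y) {g : V → Fin 3}
    (hg : WDom G ![2, 1, 0] g) :
    WDom (lexProd G H) ![2, 0, 0] (fun p => if p.2 = w₀ then g p.1 else 0) := by
  set F : V × W → Fin 3 := fun p => if p.2 = w₀ then g p.1 else 0
  have hF : ∀ p, (F p : ℕ) = if p.2 = w₀ then (g p.1 : ℕ) else 0 := fun p => by
    simp only [F]; split_ifs <;> rfl
  rintro ⟨v, w⟩
  have hnbr : neighborSum (lexProd G H) (fun p => F p) (v, w) =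
      neighborSum G (fun u => g u) v + if H.Adj w w₀ then (g v : ℕ) else 0 := by
    rw [neighborSum_lexProd]
    simp only [neighborSum, hF]
    rw [Fintype.sum_eq_single w₀ fun y hy => by simp [hy]]
    simp
  change ![2, 0, 0] (F (v, w)) ≤ neighborSum (lexProd G H) (fun p => F p) (v, w)
  have hgv : ![2, 1, 0] (g v) ≤ neighborSum G (fun u => g u) v := hg v
  obtain ⟨hle, hadd⟩ :
      ![2, 0, 0] (g v) ≤ ![2, 1, 0] (g v) ∧ (g v : ℕ) + ![2, 1, 0] (g v) = 2 :=
    (by decide : ∀ i : Fin 3, ![2, 0, 0] i ≤ ![2, 1, 0] i ∧ (i : ℕ) + ![2, 1, 0] i = 2)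
      (g v)
  rw [hnbr]
  rcases hw₀ w with rfl | hadj
  · rw [show F (v, w) = g v from if_pos rfl, if_neg H.irrefl]
    omega
  · rw [show F (v, w) = 0 from if_neg hadj.ne', if_pos hadj.symm]
    change 2 ≤ _
    omega

lemma two_le_neighborSum_add_fiberSum [Nontrivial W] {f : V × W → Fin 3}
    (hf : WDom (lexProd G H) ![2, 0, 0] f) (v : V) :
    2 ≤ neighborSum G (fun u => ∑ y, (f (u, y) : ℕ)) v + ∑ y, (f (v, y) : ℕ) := by
  by_cases hv : 2 ≤ ∑ y, (f (v, y) : ℕ)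
  · omega
  obtain ⟨y, hy⟩ := exists_eq_zero_of_sum_le_one (f := fun y => (f (v, y) : ℕ)) (by omega)
  have hdom : ![2, 0, 0] (f (v, y)) ≤ neighborSum (lexProd G H) (fun p => f p) (v, y) :=
    hf (v, y)
  rw [show f (v, y) = 0 from Fin.ext hy, neighborSum_lexProd] at hdom
  have hfiber := neighborSum_le_sum H (fun y => (f (v, y) : ℕ)) y
  change 2 ≤ _ at hdom
  omega

lemma wDom_min_two_fiberSum [Nontrivial W] {f : V × W → Fin 3}
    (hf : WDom (lexProd G H) ![2, 0, 0] f) :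
    WDom G ![2, 1, 0] (fun v => ⟨min 2 (∑ y, (f (v, y) : ℕ)), by omega⟩) := by
  intro v
  have h2 := two_le_neighborSum_add_fiberSum hf v
  have hmin := min_neighborSum_le G 2 (fun u => ∑ y, (f (u, y) : ℕ)) v
  have hadd := (by decide : ∀ i : Fin 3, (i : ℕ) + ![2, 1, 0] i = 2)
    ⟨min 2 (∑ y, (f (v, y) : ℕ)), by omega⟩
  change _ ≤ neighborSum G (fun u => min 2 (∑ y, (f (u, y) : ℕ))) v
  beta_reduce
  simp only at hadd
  omega

variable (G)

theorem gammaI_lexProd_le_gammaW {w₀ : W} (hw₀ : ∀ y, y = w₀ ∨ H.Adj w₀ y) :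
    gammaI (lexProd G H) ≤ gammaW G ![2, 1, 0] := by
  obtain ⟨g, hg, hsum⟩ := exists_wDom_sum_eq_gammaW G ![2, 1, 0] rfl
  refine (gammaW_le_sum (wDom_lexProd_of_wDom hw₀ hg)).trans_eq ?_
  rw [← hsum, Fintype.sum_prod_type]
  exact sum_congr rfl fun v _ => by simp [apply_ite]

variable (H)

theorem gammaW_le_gammaI_lexProd [Nontrivial W] :
    gammaW G ![2, 1, 0] ≤ gammaI (lexProd G H) := by
  obtain ⟨f, hf, hsum⟩ := exists_wDom_sum_eq_gammaW (lexProd G H) ![2, 0, 0] rfl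
  refine (gammaW_le_sum (wDom_min_two_fiberSum hf)).trans ?_
  rw [gammaI, ← hsum, Fintype.sum_prod_type]
  exact sum_le_sum fun v _ => min_le_right _ _

end

theorem italian_lex_of_gamma_eq_one_general {V W : Type*} [Fintype V] [Fintype W] [Nontrivial W]
    (G : SimpleGraph V) (H : SimpleGraph W)
    (hH : gamma H = 1) :
    gammaI (lexProd G H) = gammaW G ![2,1,0] := by
  obtain ⟨w₀, hw₀⟩ := exists_forall_eq_or_adj_of_gamma_eq_one hH
  exact (gammaI_lexProd_le_gammaW G hw₀).antisymm (gammaW_le_gammaI_lexProd G H)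

theorem italian_lex_of_gamma_eq_one {V W : Type*} [Fintype V] [Fintype W] [Nontrivial W]
    (G : SimpleGraph V) (H : SimpleGraph W)
    (hG : ∀ v, ∃ u, G.Adj v u) (hH : gamma H = 1) :
    gammaI (lexProd G H) = gammaW G ![2,1,0] :=
  italian_lex_of_gamma_eq_one_general G H hH
end

section
/- Let G be a graph with no isolated vertex and H a nontrivial graph with γ_2(H) > γ(H) = 2, and assume γ_I(H) ≠ 3 or γ(H) ≠ 3. Then γ_I(G∘H) = γ_{(2,2,1)}(G). -/
open scoped Classical
open Finset SimpleGraph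

/-! Let `ω v` be the weight an Italian function on `G ∘ H` puts on the fibre over `v`.
Since `γ(H) ≥ 2`, a fibre of weight at most `1` contains an unweighted vertex with no weighted
neighbour inside the fibre, so `ω(N(v)) ≥ 2`; and since `γ(H) ≥ 2` and `γ₂(H) ≥ 3` force
`γ_I(H) ≥ 3`, a fibre with no weight in its neighbourhood has `ω v ≥ 3`. Truncating `ω` at `2`
and spending the surplus unit of each such fibre on a neighbour gives a `(2,2,1)`-dominating
function on `G` of no larger weight. Conversely, a `(2,2,1)`-dominating function `f` becomes an
Italian function of the same weight by putting `f v` units on a dominating pair of `H` in the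
fibre over `v`. -/

noncomputable def nbhdWeight {V : Type*} [Fintype V] (G : SimpleGraph V) (φ : V → ℕ) (v : V) : ℕ :=
  ∑ u, if G.Adj v u then φ u else 0

section General

variable {V : Type*} [Fintype V] {G : SimpleGraph V}

lemma le_nbhdWeight {φ : V → ℕ} {v u : V} (h : G.Adj v u) : φ u ≤ nbhdWeight G φ v := by
  unfold nbhdWeight
  simpa [h] using Finset.single_le_sum (f := fun u => if G.Adj v u then φ u else 0)
    (fun _ _ => Nat.zero_le _) (Finset.mem_univ u)

lemma nbhdWeight_eq_zero_iff {φ : V → ℕ} {v : V} :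
    nbhdWeight G φ v = 0 ↔ ∀ u, G.Adj v u → φ u = 0 := by
  simp [nbhdWeight, Finset.sum_eq_zero_iff]

lemma nbhdWeight_mono {φ ψ : V → ℕ} (h : ∀ u, φ u ≤ ψ u) (v : V) :
    nbhdWeight G φ v ≤ nbhdWeight G ψ v :=
  Finset.sum_le_sum fun u _ => by split_ifs <;> simp [h u]

lemma two_le_nbhdWeight_min_two {φ : V → ℕ} {v : V} (h : 2 ≤ nbhdWeight G φ v) :
    2 ≤ nbhdWeight G (fun u => min (φ u) 2) v := by
  by_cases hbig : ∃ u, G.Adj v u ∧ 2 ≤ φ u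
  · obtain ⟨u, hvu, hu⟩ := hbig
    exact (le_min hu le_rfl).trans (le_nbhdWeight (φ := fun u => min (φ u) 2) hvu)
  · push Not at hbig
    refine h.trans_eq (Finset.sum_congr rfl fun u _ => ?_)
    split_ifs with hvu
    · exact (min_eq_left (hbig u hvu).le).symm
    · rfl

lemma wdom_221_iff (f : V → Fin 3) :
    WDom G ![2,2,1] f ↔ ∀ v, (if (f v : ℕ) = 2 then 1 else 2) ≤ nbhdWeight G (fun u => f u) v := by
  refine forall_congr' fun v => ?_
  have : (![2,2,1] : Fin 3 → ℕ) (f v) = if (f v : ℕ) = 2 then 1 else 2 := by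
    generalize f v = i
    fin_cases i <;> rfl
  rw [this]
  rfl

lemma wdom_italian_iff (f : V → Fin 3) :
    WDom G ![2,0,0] f ↔ ∀ v, (f v : ℕ) = 0 → 2 ≤ nbhdWeight G (fun u => f u) v := by
  refine forall_congr' fun v => ?_
  generalize hi : f v = i
  fin_cases i <;> simp [nbhdWeight]

lemma gammaW_le_of_wdom {l : ℕ} {w : Fin (l+1) → ℕ} {f : V → Fin (l+1)} (hf : WDom G w f) :
    gammaW G w ≤ ∑ v, (f v : ℕ) :=
  Nat.sInf_le ⟨f, hf, rfl⟩

lemma exists_wdom_weight_eq_gammaW {l : ℕ} {w : Fin (l+1) → ℕ} (h : ∃ f, WDom G w f) :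
    ∃ f, WDom G w f ∧ ∑ v, (f v : ℕ) = gammaW G w :=
  Nat.sInf_mem (s := {n | ∃ f : V → Fin (l+1), WDom G w f ∧ ∑ v, (f v : ℕ) = n})
    (let ⟨f, hf⟩ := h; ⟨_, f, hf, rfl⟩)

lemma card_support_le_sum (φ : V → ℕ) : #{v | φ v ≠ 0} ≤ ∑ v, φ v := by
  rw [Finset.card_filter]
  exact Finset.sum_le_sum fun v _ => by split_ifs <;> omega

lemma fin_three_val_eq (i : Fin 3) :
    (i : ℕ) = (if (i : ℕ) ≠ 0 then 1 else 0) + (if (i : ℕ) = 2 then 1 else 0) := by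
  decide +revert

lemma sum_val_eq_card_support_add_card_two (f : V → Fin 3) :
    ∑ v, (f v : ℕ) = #{v | (f v : ℕ) ≠ 0} + #{v | (f v : ℕ) = 2} := by
  rw [Finset.card_filter, Finset.card_filter, ← Finset.sum_add_distrib]
  exact Finset.sum_congr rfl fun v _ => fin_three_val_eq (f v)

lemma gamma_le_card_support {φ : V → ℕ} (h : ∀ v, φ v = 0 → nbhdWeight G φ v ≠ 0) :
    gamma G ≤ #{v | φ v ≠ 0} := by
  refine Nat.sInf_le ⟨_, fun v => ?_, rfl⟩
  by_cases hv : φ v = 0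
  · obtain ⟨u, hvu, hu⟩ : ∃ u, G.Adj v u ∧ φ u ≠ 0 := by
      simpa [nbhdWeight_eq_zero_iff] using h v hv
    exact Or.inr ⟨u, by simpa using hu, hvu.symm⟩
  · exact Or.inl (by simpa using hv)

lemma gamma2_le_sum_of_italian {f : V → Fin 3} (hf : WDom G ![2,0,0] f)
    (hno2 : ∀ v, (f v : ℕ) ≠ 2) : gamma2 G ≤ ∑ v, (f v : ℕ) := by
  set S : Finset V := {v | (f v : ℕ) ≠ 0}
  have hS : ∀ x ∉ S, 2 ≤ #(S.filter fun u => G.Adj u x) := by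
    intro x hx
    have hx0 : (f x : ℕ) = 0 := by simpa [S] using hx
    refine ((wdom_italian_iff f).1 hf x hx0).trans_eq ?_
    rw [Finset.card_filter, Finset.sum_filter]
    refine Finset.sum_congr rfl fun u _ => ?_
    have := hno2 u
    have := (f u).isLt
    by_cases hxu : G.Adj x u <;> by_cases hu : (f u : ℕ) = 0 <;>
      simp [hxu, hu, G.adj_comm u x]; omega
  have hle : gamma2 G ≤ #S := Nat.sInf_le ⟨S, hS, rfl⟩
  exact hle.trans (card_support_le_sum _)

lemma three_le_sum_of_italian (hγ : 2 ≤ gamma G) (hγ2 : 2 < gamma2 G) {f : V → Fin 3}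
    (hf : WDom G ![2,0,0] f) : 3 ≤ ∑ v, (f v : ℕ) := by
  by_cases h2 : ∃ v, (f v : ℕ) = 2
  · obtain ⟨v, hv⟩ := h2
    have hsupp : gamma G ≤ #{v | (f v : ℕ) ≠ 0} :=
      gamma_le_card_support fun v hv => by
        have := (wdom_italian_iff f).1 hf v hv
        omega
    have htwo : 0 < #{v | (f v : ℕ) = 2} := Finset.card_pos.2 ⟨v, by simpa using hv⟩
    rw [sum_val_eq_card_support_add_card_two]
    omega
  · push Not at h2
    exact hγ2.trans_le (gamma2_le_sum_of_italian hf h2)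

noncomputable def heavyIsolated (G : SimpleGraph V) (ω : V → ℕ) : Finset V :=
  {b | 2 ≤ ω b ∧ nbhdWeight G ω b = 0}

lemma mem_heavyIsolated {ω : V → ℕ} {b : V} :
    b ∈ heavyIsolated G ω ↔ 2 ≤ ω b ∧ nbhdWeight G ω b = 0 := by
  simp [heavyIsolated]

lemma sum_min_two_add_card_heavyIsolated_le {ω : V → ℕ}
    (hisol : ∀ v, 2 ≤ ω v → nbhdWeight G ω v = 0 → 3 ≤ ω v) :
    ∑ v, min (ω v) 2 + #(heavyIsolated G ω) ≤ ∑ v, ω v := by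
  rw [heavyIsolated, Finset.card_filter, ← Finset.sum_add_distrib]
  refine Finset.sum_le_sum fun v _ => ?_
  split_ifs with hv
  · have := hisol v hv.1 hv.2
    omega
  · simp

lemma exists_wdom_221_le (hG : ∀ v, ∃ u, G.Adj v u) (ω : V → ℕ)
    (hlow : ∀ v, ω v ≤ 1 → 2 ≤ nbhdWeight G ω v)
    (hisol : ∀ v, 2 ≤ ω v → nbhdWeight G ω v = 0 → 3 ≤ ω v) :
    ∃ f : V → Fin 3, WDom G ![2,2,1] f ∧ ∑ v, (f v : ℕ) ≤ ∑ v, ω v := by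
  choose nb hnb using hG
  set B := heavyIsolated G ω
  set T : Finset V := B.image nb
  have hT : ∀ v ∈ T, ω v = 0 := by
    simp only [T, Finset.mem_image, forall_exists_index, and_imp]
    rintro _ b hb rfl
    exact nbhdWeight_eq_zero_iff.1 (mem_heavyIsolated.1 hb).2 _ (hnb b)
  set φ : V → ℕ := fun v => min (ω v) 2 + if v ∈ T then 1 else 0
  have hφT : ∀ v ∈ T, φ v = 1 := fun v hv => by simp [φ, hv, hT v hv]
  have hφ : ∀ v, φ v ≤ 2 := fun v => by
    by_cases hv : v ∈ T
    · simp [hφT v hv]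
    · simp [φ, hv]
  have hmin : ∀ v, min (ω v) 2 ≤ φ v := fun v => Nat.le_add_right _ _
  refine ⟨fun v => ⟨φ v, Nat.lt_succ_of_le (hφ v)⟩, (wdom_221_iff _).2 fun v => ?_, ?_⟩
  · change (if φ v = 2 then 1 else 2) ≤ nbhdWeight G φ v
    split_ifs with h2
    · have hv : 2 ≤ ω v := by
        by_cases hv : v ∈ T
        · simp [hφT v hv] at h2
        · simp only [φ, hv, if_false, add_zero] at h2
          omega
      by_cases hvB : nbhdWeight G ω v = 0
      · have : nb v ∈ T := Finset.mem_image_of_mem nb (mem_heavyIsolated.2 ⟨hv, hvB⟩)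
        exact (hφT _ this).ge.trans (le_nbhdWeight (hnb v))
      · obtain ⟨u, hvu, hu⟩ : ∃ u, G.Adj v u ∧ ω u ≠ 0 := by
          simpa [nbhdWeight_eq_zero_iff] using hvB
        exact (le_min (Nat.one_le_iff_ne_zero.2 hu) one_le_two).trans
          ((hmin u).trans (le_nbhdWeight hvu))
    · have hv : ω v ≤ 1 := by
        by_contra! hv
        have := hmin v
        have := hφ v
        omega
      exact (two_le_nbhdWeight_min_two (hlow v hv)).trans (nbhdWeight_mono hmin v)
  · change ∑ v, φ v ≤ ∑ v, ω v
    calc ∑ v, φ v = ∑ v, min (ω v) 2 + #T := by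
          simp only [φ, Finset.sum_add_distrib, Finset.sum_boole, Finset.filter_mem_eq_inter,
            Finset.univ_inter, Nat.cast_id]
      _ ≤ ∑ v, min (ω v) 2 + #B := Nat.add_le_add_left Finset.card_image_le _
      _ ≤ ∑ v, ω v := sum_min_two_add_card_heavyIsolated_le hisol

end General

section LexProd

variable {V W : Type*} [Fintype V] [Fintype W] {G : SimpleGraph V} {H : SimpleGraph W}

lemma nbhdWeight_lexProd (φ : V × W → ℕ) (v : V) (x : W) :
    nbhdWeight (lexProd G H) φ (v, x)
      = nbhdWeight G (fun u => ∑ y, φ (u, y)) v + nbhdWeight H (fun y => φ (v, y)) x := by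
  have hsplit : ∀ p : V × W, (if (lexProd G H).Adj (v, x) p then φ p else 0)
      = (if G.Adj v p.1 then φ p else 0) + (if v = p.1 ∧ H.Adj x p.2 then φ p else 0) := by
    rintro ⟨u, y⟩
    by_cases hvu : G.Adj v u
    · simp [lexProd, hvu, hvu.ne]
    · simp [lexProd, hvu]
  simp only [nbhdWeight, hsplit, Finset.sum_add_distrib, Fintype.sum_prod_type, ite_and]
  congr 1
  · exact Finset.sum_congr rfl fun u _ => by split_ifs <;> simp
  · simp

lemma exists_wdom_221_le_of_italian_lexProd (hG : ∀ v, ∃ u, G.Adj v u) (hγ : 2 ≤ gamma H)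
    (hγ2 : 2 < gamma2 H) {g : V × W → Fin 3} (hg : WDom (lexProd G H) ![2,0,0] g) :
    ∃ f : V → Fin 3, WDom G ![2,2,1] f ∧ ∑ v, (f v : ℕ) ≤ ∑ p, (g p : ℕ) := by
  have hit : ∀ v x, (g (v, x) : ℕ) = 0 →
      2 ≤ nbhdWeight G (fun u => ∑ y, (g (u, y) : ℕ)) v + nbhdWeight H (fun y => g (v, y)) x :=
    fun v x hx => nbhdWeight_lexProd (fun p => (g p : ℕ)) v x ▸ (wdom_italian_iff g).1 hg _ hx
  rw [Fintype.sum_prod_type]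
  refine exists_wdom_221_le hG _ (fun v hv => ?_) (fun v _ hext => ?_)
  · obtain ⟨x, hx, hint⟩ : ∃ x, (g (v, x) : ℕ) = 0 ∧ nbhdWeight H (fun y => g (v, y)) x = 0 := by
      by_contra! h
      have := (gamma_le_card_support h).trans (card_support_le_sum _)
      omega
    simpa [hint] using hit v x hx
  · refine three_le_sum_of_italian hγ hγ2 ((wdom_italian_iff _).2 fun x hx => ?_)
    simpa [hext] using hit v x hx

lemma exists_dominating_pair_of_gamma_eq_two (hH : gamma H = 2) :
    ∃ a b, ∀ x, x = a ∨ x = b ∨ H.Adj a x ∨ H.Adj b x := by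
  have hne : {n | ∃ S : Finset W, (∀ v, v ∈ S ∨ ∃ u ∈ S, H.Adj u v) ∧ S.card = n}.Nonempty :=
    ⟨_, Finset.univ, fun v => Or.inl (Finset.mem_univ v), rfl⟩
  obtain ⟨S, hS, hcard⟩ := Nat.sInf_mem hne
  obtain ⟨a, b, -, rfl⟩ := Finset.card_eq_two.1 (hcard.trans hH)
  exact ⟨a, b, fun x => by simpa [or_assoc] using hS x⟩

lemma exists_italian_lexProd_of_wdom_221 {a b : W}
    (hab : ∀ x, x = a ∨ x = b ∨ H.Adj a x ∨ H.Adj b x) {f : V → Fin 3} (hf : WDom G ![2,2,1] f) :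
    ∃ g : V × W → Fin 3, WDom (lexProd G H) ![2,0,0] g ∧ ∑ p, (g p : ℕ) = ∑ v, (f v : ℕ) := by
  set ψ : V × W → ℕ := fun p =>
    (if p.2 = a ∧ (f p.1 : ℕ) ≠ 0 then 1 else 0) + (if p.2 = b ∧ (f p.1 : ℕ) = 2 then 1 else 0)
  have hψ : ∀ p, ψ p ≤ 2 := fun p => by simp only [ψ]; split_ifs <;> omega
  have hfibre : ∀ v, ∑ y, ψ (v, y) = f v := fun v => by
    simpa [ψ, Finset.sum_add_distrib, ite_and] using (fin_three_val_eq (f v)).symm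
  refine ⟨fun p => ⟨ψ p, Nat.lt_succ_of_le (hψ p)⟩, (wdom_italian_iff _).2 ?_, ?_⟩
  · rintro ⟨v, x⟩ hx
    change ψ (v, x) = 0 at hx
    change 2 ≤ nbhdWeight (lexProd G H) ψ (v, x)
    rw [nbhdWeight_lexProd, funext hfibre]
    have hext := (wdom_221_iff f).1 hf v
    by_cases hv : (f v : ℕ) = 2
    · rw [if_pos hv] at hext
      have hv0 : f v ≠ 0 := fun h => by simp [h] at hv
      have hint : 1 ≤ nbhdWeight H (fun y => ψ (v, y)) x := by
        rcases hab x with rfl | rfl | hax | hbx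
        · simp [ψ, hv0] at hx
        · simp [ψ, hv] at hx
        · exact le_trans (by simp [ψ, hv0]) (le_nbhdWeight hax.symm)
        · exact le_trans (by simp [ψ, hv]) (le_nbhdWeight hbx.symm)
      omega
    · rw [if_neg hv] at hext
      omega
  · simpa [Fintype.sum_prod_type] using Finset.sum_congr rfl fun v _ => hfibre v

end LexProd

theorem italian_lex_of_gamma2_gt_two_general {V W : Type*} [Fintype V] [Fintype W]
    (G : SimpleGraph V) (H : SimpleGraph W)
    (hG : ∀ v, ∃ u, G.Adj v u) (hH2 : 2 < gamma2 H) (hH : gamma H = 2) :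
    gammaI (lexProd G H) = gammaW G ![2,2,1] := by
  have hconst221 : WDom G ![2,2,1] fun _ => 2 := (wdom_221_iff _).2 fun v => by
    obtain ⟨u, hvu⟩ := hG v
    exact le_trans (by decide) (le_nbhdWeight hvu)
  have hconstI : WDom (lexProd G H) ![2,0,0] fun _ => 2 := (wdom_italian_iff _).2 (by simp)
  apply le_antisymm
  · obtain ⟨f, hf, hfw⟩ := exists_wdom_weight_eq_gammaW ⟨_, hconst221⟩
    obtain ⟨a, b, hab⟩ := exists_dominating_pair_of_gamma_eq_two hH
    obtain ⟨g, hg, hgw⟩ := exists_italian_lexProd_of_wdom_221 hab hf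
    exact (gammaW_le_of_wdom hg).trans (hgw.trans hfw).le
  · obtain ⟨g, hg, hgw⟩ := exists_wdom_weight_eq_gammaW ⟨_, hconstI⟩
    obtain ⟨f, hf, hfw⟩ := exists_wdom_221_le_of_italian_lexProd hG hH.ge hH2 hg
    exact (gammaW_le_of_wdom hf).trans (hfw.trans hgw.le)

theorem italian_lex_of_gamma2_gt_two {V W : Type*} [Fintype V] [Fintype W] [Nontrivial W]
    (G : SimpleGraph V) (H : SimpleGraph W)
    (hG : ∀ v, ∃ u, G.Adj v u) (hH2 : 2 < gamma2 H) (hH : gamma H = 2)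
    (hHI : gammaI H ≠ 3 ∨ gamma H ≠ 3) :
    gammaI (lexProd G H) = gammaW G ![2,2,1] :=
  italian_lex_of_gamma2_gt_two_general G H hG hH2 hH
end

section
/- Let G = G_1 ⊙ G_2 be a corona product where G_1 has no isolated vertices, and let w=(w_0,...,w_l) ∈ ℤ⁺ × ℕ^l. If l ≥ w_0 ≥ w_1 ≥ ... ≥ w_l and |V(G_2)| ≥ w_0, then γ_w(G) = w_0 · γ(G). -/
open scoped Classical
open Finset SimpleGraph

/-- The corona product `G1 ⊙ G2`. -/
def corona {A B : Type*} (G1 : SimpleGraph A) (G2 : SimpleGraph B) :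
    SimpleGraph (A ⊕ A × B) where
  Adj x y :=
    match x, y with
    | Sum.inl a, Sum.inl b => G1.Adj a b
    | Sum.inl a, Sum.inr p => a = p.1
    | Sum.inr p, Sum.inl b => p.1 = b
    | Sum.inr p, Sum.inr q => p.1 = q.1 ∧ G2.Adj p.2 q.2
  symm := by
    constructor
    rintro (a | ⟨a, u⟩) (b | ⟨b, v⟩) h
    · exact G1.adj_symm h
    · exact h.symm
    · exact h.symm
    · exact ⟨h.1.symm, G2.adj_symm h.2⟩
  loopless := by
    constructor
    rintro (a | ⟨a, u⟩) h
    · exact G1.irrefl h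
    · exact G2.irrefl h.2

/-
The fibre `{a} ∪ {a} × B` of a vertex `a` of `G1` contains the neighbourhood of each `(a, b)`, and
the fibres partition the corona. A `w`-dominating function puts weight at least `w 0`
on each fibre: if some `(a, b)` gets `0`, its neighbourhood (inside the fibre) needs weight `w 0`,
and otherwise the fibre already carries at least `|B| ≥ w 0`. Conversely, weight `w 0` on every
vertex of `G1` and `0` elsewhere is `w`-dominating because `G1` has no isolated vertices. The
vertices of `G1` form a minimum dominating set, since every fibre must be hit.
-/

namespace Corona

variable {A B : Type*} [Fintype A] [Fintype B] {G1 : SimpleGraph A} {G2 : SimpleGraph B}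

def root : A ⊕ A × B → A := Sum.elim id Prod.fst

omit [Fintype A] [Fintype B] in
theorem root_eq_of_adj_inr {p : A × B} {v : A ⊕ A × B} (h : (corona G1 G2).Adj (.inr p) v) :
    root v = p.1 := by
  rcases v with a | q
  · exact h.symm
  · exact h.1.symm

theorem sum_eq_sum_fibre (g : A ⊕ A × B → ℕ) :
    ∑ v, g v = ∑ a, (g (.inl a) + ∑ b, g (.inr (a, b))) := by
  rw [Fintype.sum_sum_type, Fintype.sum_prod_type, sum_add_distrib]

theorem sum_ite_root_eq (g : A ⊕ A × B → ℕ) (a : A) :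
    (∑ v, if root v = a then g v else 0) = g (.inl a) + ∑ b, g (.inr (a, b)) := by
  rw [Fintype.sum_sum_type, Fintype.sum_prod_type, sum_comm]
  congr 1
  · exact Fintype.sum_ite_eq' a _
  · exact sum_congr rfl fun b _ => Fintype.sum_ite_eq' a (fun x => g (.inr (x, b)))

theorem le_fibre_weight {l : ℕ} {w : Fin (l+1) → ℕ} {f : A ⊕ A × B → Fin (l+1)}
    (hf : WDom (corona G1 G2) w f) (hB : w 0 ≤ Fintype.card B) (a : A) :
    w 0 ≤ (f (.inl a) : ℕ) + ∑ b, (f (.inr (a, b)) : ℕ) := by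
  by_cases hzero : ∃ b, f (.inr (a, b)) = 0
  · obtain ⟨b, hb⟩ := hzero
    calc w 0 = w (f (.inr (a, b))) := by rw [hb]
      _ ≤ ∑ v, if (corona G1 G2).Adj (.inr (a, b)) v then (f v : ℕ) else 0 := hf _
      _ ≤ ∑ v, if root v = a then (f v : ℕ) else 0 := by
        gcongr with v
        by_cases hadj : (corona G1 G2).Adj (.inr (a, b)) v
        · rw [if_pos hadj, if_pos (root_eq_of_adj_inr hadj)]
        · rw [if_neg hadj]
          exact Nat.zero_le _
      _ = _ := sum_ite_root_eq (fun v => (f v : ℕ)) a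
  · push Not at hzero
    calc w 0 ≤ ∑ _b : B, 1 := by simpa using hB
      _ ≤ ∑ b, (f (.inr (a, b)) : ℕ) :=
        sum_le_sum fun b _ => Nat.one_le_iff_ne_zero.mpr (Fin.val_ne_zero_iff.mpr (hzero b))
      _ ≤ _ := Nat.le_add_left _ _

theorem mul_card_le_weight {l : ℕ} {w : Fin (l+1) → ℕ} {f : A ⊕ A × B → Fin (l+1)}
    (hf : WDom (corona G1 G2) w f) (hB : w 0 ≤ Fintype.card B) :
    w 0 * Fintype.card A ≤ ∑ v, (f v : ℕ) := by
  rw [sum_eq_sum_fibre, mul_comm, ← smul_eq_mul, ← Finset.card_univ, ← sum_const]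
  exact sum_le_sum fun a _ => le_fibre_weight hf hB a

theorem wDom_const_on_inl (h1 : ∀ v, ∃ u, G1.Adj v u) {l : ℕ} {w : Fin (l+1) → ℕ}
    (hw : ∀ i, w i ≤ w 0) (hl : w 0 ≤ l) :
    WDom (corona G1 G2) w (Sum.elim (fun _ => ⟨w 0, Nat.lt_succ_of_le hl⟩) 0) := by
  have weight_of_adj_inl {v : A ⊕ A × B} {a : A} (h : (corona G1 G2).Adj v (.inl a)) :
      w 0 ≤ ∑ u, if (corona G1 G2).Adj v u then
        ((Sum.elim (fun _ => ⟨w 0, Nat.lt_succ_of_le hl⟩) 0 u : Fin (l+1)) : ℕ) else 0 := by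
    refine le_trans ?_ (single_le_sum (fun _ _ => Nat.zero_le _) (mem_univ (.inl a)))
    simp [h]
  rintro (a | p)
  · obtain ⟨u, hu⟩ := h1 a
    exact (hw _).trans (weight_of_adj_inl (a := u) hu)
  · exact (hw _).trans (weight_of_adj_inl (a := p.1) rfl)

theorem gammaW_eq (h1 : ∀ v, ∃ u, G1.Adj v u) {l : ℕ} {w : Fin (l+1) → ℕ}
    (hw : ∀ i, w i ≤ w 0) (hl : w 0 ≤ l) (hB : w 0 ≤ Fintype.card B) :
    gammaW (corona G1 G2) w = w 0 * Fintype.card A := by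
  refine IsLeast.csInf_eq ⟨⟨_, wDom_const_on_inl h1 hw hl, ?_⟩, ?_⟩
  · simp [mul_comm]
  · rintro n ⟨f, hf, rfl⟩
    exact mul_card_le_weight hf hB

theorem gamma_eq [Nonempty B] : gamma (corona G1 G2) = Fintype.card A := by
  refine IsLeast.csInf_eq ⟨⟨univ.image .inl, ?_, ?_⟩, ?_⟩
  · rintro (a | p)
    · exact .inl (mem_image_of_mem _ (mem_univ a))
    · exact .inr ⟨.inl p.1, mem_image_of_mem _ (mem_univ _), rfl⟩
  · rw [card_image_of_injective _ Sum.inl_injective, card_univ]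
  · rintro n ⟨S, hS, rfl⟩
    obtain ⟨b⟩ := ‹Nonempty B›
    have hroots : univ ⊆ S.image root := fun a _ => by
      rcases hS (.inr (a, b)) with h | ⟨u, hu, hadj⟩
      · exact mem_image_of_mem _ h
      · exact mem_image.mpr ⟨u, hu, root_eq_of_adj_inr hadj.symm⟩
    exact (card_le_card hroots).trans card_image_le

end Corona

theorem gammaW_corona_general {A B : Type*} [Fintype A] [Fintype B]
    (G1 : SimpleGraph A) (G2 : SimpleGraph B) {l : ℕ} (w : Fin (l+1) → ℕ)
    (h1 : ∀ v, ∃ u, G1.Adj v u) (hw : Antitone w)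
    (hl : w 0 ≤ l) (hB : w 0 ≤ Fintype.card B) :
    gammaW (corona G1 G2) w = w 0 * gamma (corona G1 G2) := by
  have hw_le_zero : ∀ i, w i ≤ w 0 := fun i => hw (Fin.zero_le i)
  rw [Corona.gammaW_eq h1 hw_le_zero hl hB]
  rcases Nat.eq_zero_or_pos (w 0) with hzero | hpos
  · simp [hzero]
  · have : Nonempty B := Fintype.card_pos_iff.mp (hpos.trans_le hB)
    rw [Corona.gamma_eq]

theorem gammaW_corona {A B : Type*} [Fintype A] [Fintype B]
    (G1 : SimpleGraph A) (G2 : SimpleGraph B) {l : ℕ} (w : Fin (l+1) → ℕ)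
    (h1 : ∀ v, ∃ u, G1.Adj v u) (hw : Antitone w) (h0 : 1 ≤ w 0)
    (hl : w 0 ≤ l) (hB : w 0 ≤ Fintype.card B) :
    gammaW (corona G1 G2) w = w 0 * gamma (corona G1 G2) :=
  gammaW_corona_general G1 G2 w h1 hw hl hB
end

section
/- For a graph G, γ_{(2,2,2)}(G) = 4 if and only if at least one of the following holds: (i) γ_{×2,t}(G)=4; (ii) γ_t(G)=2 and G has minimum degree 1; (iii) γ_t(G)=2 and γ_{×2,t}(G) ≥ 4. -/
open scoped Classical
open Finset SimpleGraph

/-!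
If a `(2,2,2)`-dominating function `f` takes the value `2` at `u`, then `u` and its neighbourhood
already carry weight `4`; if the total weight is exactly `4`, then `u` together with any neighbour
`v` with `f v ≠ 0` totally dominates, since a vertex adjacent to neither sees weight at most
`4 - 2 - 1`. A `(2,2,2)`-dominating function with values in `{0, 1}` is the indicator of a double
total dominating set. So the functions of weight `3` are the double total dominating sets of size
`3`, and those of weight `4` come from double total dominating sets of size `4` or from total
dominating sets `S` of size `2` (as `2 · 1_S`). Conditions (ii) and (iii) split the second case
according to whether a double total dominating set exists at all, i.e. whether `δ(G) ≥ 2`.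
-/

namespace Nat

theorem sInf_eq_succ_iff_of_forall_le {s : Set ℕ} {k : ℕ} (h : ∀ m ∈ s, k ≤ m) :
    sInf s = k + 1 ↔ k + 1 ∈ s ∧ k ∉ s := by
  constructor
  · intro hs
    refine ⟨hs ▸ sInf_mem (nonempty_of_sInf_eq_succ hs), fun hk => ?_⟩
    have := Nat.sInf_le hk
    omega
  · rintro ⟨hk1, hk⟩
    refine le_antisymm (Nat.sInf_le hk1) (le_csInf ⟨_, hk1⟩ fun m hm => ?_)
    exact lt_of_le_of_ne (h m hm) fun e => hk (e ▸ hm)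

theorem succ_le_sInf_iff_of_forall_le {s : Set ℕ} {k : ℕ} (h : ∀ m ∈ s, k ≤ m) :
    k + 1 ≤ sInf s ↔ s.Nonempty ∧ k ∉ s := by
  constructor
  · intro hs
    refine ⟨nonempty_of_pos_sInf (by omega), fun hk => ?_⟩
    have := Nat.sInf_le hk
    omega
  · rintro ⟨hne, hk⟩
    exact le_csInf hne fun m hm => lt_of_le_of_ne (h m hm) fun e => hk (e ▸ hm)

end Nat

theorem sum_val_ite_mem {V : Type*} [Fintype V] {l : ℕ} (S : Finset V) (c : Fin (l + 1)) :
    ∑ v, ((if v ∈ S then c else 0 : Fin (l + 1)) : ℕ) = c * S.card := by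
  simp [apply_ite, mul_comm]

namespace SimpleGraph

variable {V : Type*} (G : SimpleGraph V)

def IsTotalDominating (S : Finset V) : Prop :=
  ∀ v, ∃ u ∈ S, G.Adj u v

def IsDoubleTotalDominating (S : Finset V) : Prop :=
  ∀ v, 2 ≤ (S.filter (G.Adj · v)).card

variable {G}

theorem IsTotalDominating.two_le_card [Nonempty V] {S : Finset V}
    (hS : G.IsTotalDominating S) : 2 ≤ S.card := by
  obtain ⟨a, ha, -⟩ := hS (Classical.arbitrary V)
  obtain ⟨b, hb, hba⟩ := hS a
  exact Finset.one_lt_card.2 ⟨b, hb, a, ha, hba.ne⟩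

theorem IsDoubleTotalDominating.three_le_card [Nonempty V] {S : Finset V}
    (hS : G.IsDoubleTotalDominating S) : 3 ≤ S.card := by
  obtain ⟨a, ha⟩ : (S.filter (G.Adj · (Classical.arbitrary V))).Nonempty :=
    Finset.card_pos.1 (by have := hS (Classical.arbitrary V); omega)
  have hsub : S.filter (G.Adj · a) ⊆ S.erase a := fun u hu => by
    rw [Finset.mem_filter] at hu
    exact Finset.mem_erase.2 ⟨hu.2.ne, hu.1⟩
  have := (hS a).trans (Finset.card_le_card hsub)
  rw [Finset.card_erase_of_mem (Finset.mem_filter.1 ha).1] at this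
  omega

variable [Fintype V] (G)

theorem exists_forall_le_card_filter_adj_iff [Nonempty V] (k : ℕ) :
    (∃ S : Finset V, ∀ v, k ≤ (S.filter (G.Adj · v)).card) ↔ k ≤ G.minDegree := by
  have hdeg : ∀ v, (Finset.univ.filter (G.Adj · v)).card = G.degree v := by
    intro v
    rw [← card_neighborFinset_eq_degree, neighborFinset_eq_filter]
    simp only [adj_comm]
  constructor
  · rintro ⟨S, hS⟩
    refine le_minDegree_of_forall_le_degree _ _ fun v => (hS v).trans ?_
    exact (hdeg v) ▸ Finset.card_le_card (Finset.filter_subset_filter _ (Finset.subset_univ S))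
  · exact fun h => ⟨Finset.univ, fun v => (hdeg v).symm ▸ h.trans (G.minDegree_le_degree v)⟩

theorem exists_isTotalDominating_iff [Nonempty V] :
    (∃ S, G.IsTotalDominating S) ↔ 1 ≤ G.minDegree := by
  simp only [← exists_forall_le_card_filter_adj_iff, IsTotalDominating, Finset.one_le_card,
    Finset.filter_nonempty_iff]

theorem exists_isDoubleTotalDominating_iff [Nonempty V] :
    (∃ S, G.IsDoubleTotalDominating S) ↔ 2 ≤ G.minDegree :=
  G.exists_forall_le_card_filter_adj_iff 2

theorem minDegree_eq_one_iff [Nonempty V] :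
    G.minDegree = 1 ↔ (∃ S, G.IsTotalDominating S) ∧ ¬∃ S, G.IsDoubleTotalDominating S := by
  rw [exists_isTotalDominating_iff, exists_isDoubleTotalDominating_iff]
  omega

theorem gammaT_eq_two_iff [Nonempty V] :
    gammaT G = 2 ↔ ∃ S, G.IsTotalDominating S ∧ S.card = 2 := by
  have hcard : ∀ m ∈ {n | ∃ S, G.IsTotalDominating S ∧ S.card = n}, 2 ≤ m := by
    rintro _ ⟨S, hS, rfl⟩
    exact hS.two_le_card
  refine (Nat.sInf_eq_succ_iff_of_forall_le fun m hm => one_le_two.trans (hcard m hm)).trans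
    ⟨And.left, fun h => ⟨h, fun h1 => ?_⟩⟩
  have := hcard 1 h1
  omega

theorem gammaX2T_eq_four_iff [Nonempty V] :
    gammaX2T G = 4 ↔ (∃ S, G.IsDoubleTotalDominating S ∧ S.card = 4) ∧
      ¬∃ S, G.IsDoubleTotalDominating S ∧ S.card = 3 :=
  Nat.sInf_eq_succ_iff_of_forall_le <| by
    rintro _ ⟨S, hS, rfl⟩
    exact IsDoubleTotalDominating.three_le_card hS

theorem four_le_gammaX2T_iff [Nonempty V] :
    4 ≤ gammaX2T G ↔ (∃ S, G.IsDoubleTotalDominating S) ∧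
      ¬∃ S, G.IsDoubleTotalDominating S ∧ S.card = 3 := by
  rw [gammaX2T, Nat.succ_le_sInf_iff_of_forall_le]
  · exact and_congr_left' ⟨fun ⟨_, S, hS, _⟩ => ⟨S, hS⟩, fun ⟨S, hS⟩ => ⟨_, S, hS, rfl⟩⟩
  · rintro _ ⟨S, hS, rfl⟩
    exact IsDoubleTotalDominating.three_le_card hS

theorem gammaW_of_isEmpty [IsEmpty V] {l : ℕ} (w : Fin (l + 1) → ℕ) : gammaW G w = 0 :=
  Nat.sInf_eq_zero.2 <| Or.inl ⟨isEmptyElim, isEmptyElim, by simp⟩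

theorem gammaT_of_isEmpty [IsEmpty V] : gammaT G = 0 :=
  Nat.sInf_eq_zero.2 <| Or.inl ⟨∅, isEmptyElim, rfl⟩

theorem gammaX2T_of_isEmpty [IsEmpty V] : gammaX2T G = 0 :=
  Nat.sInf_eq_zero.2 <| Or.inl ⟨∅, isEmptyElim, rfl⟩

variable {G} in
theorem wDom_222_iff {f : V → Fin 3} :
    WDom G ![2, 2, 2] f ↔ ∀ v, 2 ≤ ∑ u, if G.Adj v u then (f u : ℕ) else 0 := by
  have h2 : ∀ i : Fin 3, (![2, 2, 2] : Fin 3 → ℕ) i = 2 := by decide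
  simp only [WDom, h2]

theorem sum_adj_add_sum_le (f : V → ℕ) {x : V} {S : Finset V} (hS : ∀ u ∈ S, ¬G.Adj x u) :
    (∑ u, if G.Adj x u then f u else 0) + ∑ u ∈ S, f u ≤ ∑ u, f u := by
  rw [← Finset.sum_filter, ← Finset.sum_union <|
    Finset.disjoint_left.2 fun u hu huS => hS u huS (Finset.mem_filter.1 hu).2]
  exact Finset.sum_le_sum_of_subset (Finset.subset_univ _)

theorem sum_adj_val_ite_mem {l : ℕ} (S : Finset V) (c : Fin (l + 1)) (v : V) :
    (∑ u, if G.Adj v u then ((if u ∈ S then c else 0 : Fin (l + 1)) : ℕ) else 0) =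
      c * (S.filter (G.Adj · v)).card := by
  simp only [apply_ite, Fin.val_zero, ← Finset.sum_filter, Finset.sum_const, smul_eq_mul]
  rw [mul_comm]
  congr 2
  ext u
  simp [and_comm, adj_comm]

variable {G}

theorem wDom_222_ite_mem_one_iff {S : Finset V} :
    WDom G ![2, 2, 2] (fun v => if v ∈ S then 1 else 0) ↔ G.IsDoubleTotalDominating S := by
  simp [wDom_222_iff, sum_adj_val_ite_mem, IsDoubleTotalDominating]

theorem wDom_222_ite_mem_two_iff {S : Finset V} :
    WDom G ![2, 2, 2] (fun v => if v ∈ S then 2 else 0) ↔ G.IsTotalDominating S := by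
  simp [wDom_222_iff, sum_adj_val_ite_mem, IsTotalDominating, Finset.filter_nonempty_iff]

theorem exists_eq_ite_mem_of_ne_two {f : V → Fin 3} (h : ∀ v, f v ≠ 2) :
    ∃ S : Finset V, f = fun v => if v ∈ S then 1 else 0 := by
  refine ⟨Finset.univ.filter (f · = 1), funext fun v => ?_⟩
  simp only [Finset.mem_filter, Finset.mem_univ, true_and]
  have := h v
  generalize f v = i at this ⊢
  fin_cases i <;> simp_all

variable {f : V → Fin 3}

theorem WDom.four_le_sum_of_eq_two (hf : WDom G ![2, 2, 2] f) {u : V} (hu : f u = 2) :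
    4 ≤ ∑ v, (f v : ℕ) := by
  have hN := wDom_222_iff.1 hf u
  have := G.sum_adj_add_sum_le (fun v => (f v : ℕ)) (x := u) (S := {u}) (by simp)
  rw [Finset.sum_singleton, hu] at this
  exact le_trans (Nat.add_le_add_right hN 2) this

theorem WDom.exists_isTotalDominating_of_eq_two (hf : WDom G ![2, 2, 2] f) {u : V}
    (hu : f u = 2) (hw : ∑ v, (f v : ℕ) ≤ 4) : ∃ S, G.IsTotalDominating S ∧ S.card = 2 := by
  have hN := wDom_222_iff.1 hf
  obtain ⟨v, -, hv⟩ := Finset.exists_ne_zero_of_sum_ne_zero (s := Finset.univ)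
    (f := fun v => if G.Adj u v then (f v : ℕ) else 0) (by have := hN u; omega)
  have huv : G.Adj u v := by
    by_contra h
    simp [h] at hv
  refine ⟨{u, v}, fun x => ?_, Finset.card_pair huv.ne⟩
  by_contra! hx
  have hle := G.sum_adj_add_sum_le (fun v => (f v : ℕ)) (x := x) (S := {u, v})
    fun w hw hxw => hx w hw hxw.symm
  rw [Finset.sum_pair huv.ne, hu] at hle
  simp only [huv, if_true] at hv
  have := hN x
  omega

theorem WDom.exists_isDoubleTotalDominating_or_exists_eq_two (hf : WDom G ![2, 2, 2] f) :
    (∃ S, G.IsDoubleTotalDominating S ∧ S.card = ∑ v, (f v : ℕ)) ∨ ∃ u, f u = 2 := by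
  by_cases h : ∃ u, f u = 2
  · exact Or.inr h
  push Not at h
  obtain ⟨S, rfl⟩ := exists_eq_ite_mem_of_ne_two h
  exact Or.inl ⟨S, wDom_222_ite_mem_one_iff.1 hf, by simp [sum_val_ite_mem]⟩

theorem WDom.three_le_sum [Nonempty V] (hf : WDom G ![2, 2, 2] f) : 3 ≤ ∑ v, (f v : ℕ) := by
  rcases hf.exists_isDoubleTotalDominating_or_exists_eq_two with ⟨S, hS, hw⟩ | ⟨u, hu⟩
  · exact hw ▸ hS.three_le_card
  · exact le_trans (by norm_num) (hf.four_le_sum_of_eq_two hu)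

variable (G)

theorem exists_wDom_222_sum_eq_three_iff :
    (∃ f : V → Fin 3, WDom G ![2, 2, 2] f ∧ ∑ v, (f v : ℕ) = 3) ↔
      ∃ S, G.IsDoubleTotalDominating S ∧ S.card = 3 := by
  constructor
  · rintro ⟨f, hf, hw⟩
    rcases hf.exists_isDoubleTotalDominating_or_exists_eq_two with ⟨S, hS, hc⟩ | ⟨u, hu⟩
    · exact ⟨S, hS, hc.trans hw⟩
    · have := hf.four_le_sum_of_eq_two hu
      omega
  · rintro ⟨S, hS, hc⟩
    exact ⟨_, wDom_222_ite_mem_one_iff.2 hS, by simp [sum_val_ite_mem, hc]⟩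

theorem exists_wDom_222_sum_eq_four_iff :
    (∃ f : V → Fin 3, WDom G ![2, 2, 2] f ∧ ∑ v, (f v : ℕ) = 4) ↔
      (∃ S, G.IsDoubleTotalDominating S ∧ S.card = 4) ∨
        ∃ S, G.IsTotalDominating S ∧ S.card = 2 := by
  constructor
  · rintro ⟨f, hf, hw⟩
    rcases hf.exists_isDoubleTotalDominating_or_exists_eq_two with ⟨S, hS, hc⟩ | ⟨u, hu⟩
    · exact Or.inl ⟨S, hS, hc.trans hw⟩
    · exact Or.inr (hf.exists_isTotalDominating_of_eq_two hu hw.le)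
  · rintro (⟨S, hS, hc⟩ | ⟨S, hS, hc⟩)
    · exact ⟨_, wDom_222_ite_mem_one_iff.2 hS, by simp [sum_val_ite_mem, hc]⟩
    · exact ⟨_, wDom_222_ite_mem_two_iff.2 hS, by simp [sum_val_ite_mem, hc]⟩

theorem gammaW_222_eq_four_iff_exists [Nonempty V] :
    gammaW G ![2, 2, 2] = 4 ↔ (∃ f : V → Fin 3, WDom G ![2, 2, 2] f ∧ ∑ v, (f v : ℕ) = 4) ∧
      ¬∃ f : V → Fin 3, WDom G ![2, 2, 2] f ∧ ∑ v, (f v : ℕ) = 3 :=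
  Nat.sInf_eq_succ_iff_of_forall_le <| by
    rintro _ ⟨f, hf, rfl⟩
    exact WDom.three_le_sum hf

end SimpleGraph

theorem gammaW222_eq_four_iff {V : Type*} [Fintype V] (G : SimpleGraph V) :
    gammaW G ![2,2,2] = 4 ↔
      (gammaX2T G = 4 ∨ (gammaT G = 2 ∧ G.minDegree = 1) ∨
        (gammaT G = 2 ∧ 4 ≤ gammaX2T G)) := by
  rcases isEmpty_or_nonempty V with _ | _
  · simp [gammaW_of_isEmpty, gammaT_of_isEmpty, gammaX2T_of_isEmpty]
  rw [gammaW_222_eq_four_iff_exists, exists_wDom_222_sum_eq_four_iff,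
    exists_wDom_222_sum_eq_three_iff, gammaX2T_eq_four_iff, gammaT_eq_two_iff,
    minDegree_eq_one_iff, four_le_gammaX2T_iff]
  constructor
  · rintro ⟨h4 | h2, h3⟩
    · exact Or.inl ⟨h4, h3⟩
    · by_cases hD : ∃ S, G.IsDoubleTotalDominating S
      · exact Or.inr (Or.inr ⟨h2, hD, h3⟩)
      · exact Or.inr (Or.inl ⟨h2, h2.imp fun _ => And.left, hD⟩)
  · rintro (⟨h4, h3⟩ | ⟨h2, -, hD⟩ | ⟨h2, -, h3⟩)
    · exact ⟨Or.inl h4, h3⟩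
    · exact ⟨Or.inr h2, fun h3 => hD (h3.imp fun _ => And.left)⟩
    · exact ⟨Or.inr h2, h3⟩
end

section
/- For any integer n ≥ 3, γ_{(2,2,0)}(P_n) = γ_{(2,2,0)}(C_n) = 2⌈n/3⌉. -/
open scoped Classical
open Finset SimpleGraph

/-!
Taking weight 2 on a dominating set of `P_n` with one vertex in each block of three consecutive
vertices gives the upper bound for `P_n`, hence for `C_n ⊇ P_n`. Conversely a `(2,2,0)`-function on
`P_n` is one on `C_n`, and on `C_n` every window `v - 1, v, v + 1` carries weight at least 2; the
windows cover each vertex three times, so `3 · weight ≥ 2n`. This is already the bound unless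
`n ≡ 1 (mod 3)` and the weight is odd; then some vertex has value 1, and the three windows around
it carry an excess of at least 2 over the minimum, which gives `3 · weight ≥ 2n + 2`.
-/

section WDom

variable {V : Type*} [Fintype V] {G H : SimpleGraph V} {l : ℕ} {w : Fin (l + 1) → ℕ}

lemma WDom.mono {f : V → Fin (l + 1)} (hf : WDom G w f) (hGH : G ≤ H) : WDom H w f := by
  intro v
  refine (hf v).trans (sum_le_sum fun u _ => ?_)
  by_cases h : G.Adj v u
  · rw [if_pos h, if_pos (hGH h)]
  · rw [if_neg h]
    exact Nat.zero_le _

lemma gammaW_eq {k : ℕ} {f : V → Fin (l + 1)} (hf : WDom G w f) (hk : ∑ v, (f v : ℕ) = k)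
    (hmin : ∀ f' : V → Fin (l + 1), WDom G w f' → k ≤ ∑ v, (f' v : ℕ)) : gammaW G w = k :=
  IsLeast.csInf_eq ⟨⟨f, hf, hk⟩, by rintro _ ⟨f', hf', rfl⟩; exact hmin f' hf'⟩

lemma le_sum_adj {v u : V} (h : G.Adj v u) (g : V → ℕ) :
    g u ≤ ∑ x, if G.Adj v x then g x else 0 := by
  simpa [if_pos h] using
    single_le_sum (f := fun x => if G.Adj v x then g x else 0) (fun _ _ => Nat.zero_le _)
      (mem_univ u)

lemma exists_wdom_two_two_zero {S : Finset V} (hS : ∀ v ∉ S, ∃ u ∈ S, G.Adj v u) :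
    ∃ f : V → Fin 3, WDom G ![2, 2, 0] f ∧ ∑ v, (f v : ℕ) = 2 * #S := by
  refine ⟨fun v => if v ∈ S then 2 else 0, fun v => ?_, ?_⟩
  · by_cases hv : v ∈ S
    · simp [hv]
    · obtain ⟨u, hu, hadj⟩ := hS v hv
      simpa [hv, hu] using le_sum_adj hadj fun x => ((if x ∈ S then 2 else 0 : Fin 3) : ℕ)
  · simp [apply_ite, sum_ite_mem, mul_comm]

end WDom

lemma exists_dominating_pathGraph (n : ℕ) :
    ∃ S : Finset (Fin n), #S = (n + 2) / 3 ∧ ∀ v ∉ S, ∃ u ∈ S, (pathGraph n).Adj v u := by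
  let c : Fin ((n + 2) / 3) → Fin n := fun k => ⟨min (3 * k + 1) (n - 1), by have := k.isLt; omega⟩
  have hc : Function.Injective c := by
    intro a b h
    have := a.isLt
    have := b.isLt
    simp only [c, Fin.ext_iff] at h
    ext
    omega
  refine ⟨univ.image c, by rw [card_image_of_injective _ hc, card_univ, Fintype.card_fin], ?_⟩
  intro v hv
  let u := c ⟨v / 3, by omega⟩
  have hu : (u : ℕ) = min (3 * ((v : ℕ) / 3) + 1) (n - 1) := rfl
  have hne : (v : ℕ) ≠ u := fun h => hv (Fin.ext h ▸ mem_image_of_mem _ (mem_univ _))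
  refine ⟨u, mem_image_of_mem _ (mem_univ _), ?_⟩
  rw [pathGraph_adj]
  omega

lemma add_add_le_sum {α : Type*} [Fintype α] (e : α → ℕ) {a b c : α} (hab : a ≠ b) (hac : a ≠ c)
    (hbc : b ≠ c) : e a + e b + e c ≤ ∑ x, e x :=
  calc e a + e b + e c = ∑ x ∈ {a, b, c}, e x := by
        rw [sum_insert (by simp [hab, hac]), sum_pair hbc, add_assoc]
    _ ≤ ∑ x, e x := sum_le_sum_of_subset (subset_univ _)

section Cycle

open Fin.CommRing

lemma cycleGraph_sum_adj {n : ℕ} (v : Fin (n + 3)) (g : Fin (n + 3) → ℕ) :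
    (∑ u, if (cycleGraph (n + 3)).Adj v u then g u else 0) = g (v - 1) + g (v + 1) := by
  have hne : v - 1 ≠ v + 1 := by
    intro h
    have : (2 : Fin (n + 3)) = 0 := by linear_combination -h
    simp [Fin.ext_iff, Nat.mod_eq_of_lt (show 2 < n + 3 by omega)] at this
  rw [← sum_filter, filter_congr_decidable, ← neighborFinset_eq_filter, cycleGraph_neighborFinset,
    sum_pair hne]

lemma two_le_add_of_wdom_cycleGraph {n : ℕ} {f : Fin (n + 3) → Fin 3}
    (hf : WDom (cycleGraph (n + 3)) ![2, 2, 0] f) {v : Fin (n + 3)} (hv : (f v : ℕ) ≤ 1) :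
    2 ≤ (f (v - 1) : ℕ) + f (v + 1) := by
  have hw : (![2, 2, 0] : Fin 3 → ℕ) (f v) = 2 := by
    generalize f v = a at hv
    revert a
    decide
  simpa [hw, cycleGraph_sum_adj] using hf v

variable {n : ℕ} [NeZero n] {g : Fin n → ℕ}

lemma sum_window (g : Fin n → ℕ) : ∑ v, (g (v - 1) + g v + g (v + 1)) = 3 * ∑ v, g v := by
  have hsub : ∑ v, g (v - 1) = ∑ v, g v := (Equiv.subRight 1).sum_comp g
  have hadd : ∑ v, g (v + 1) = ∑ v, g v := Equiv.sum_comp (Equiv.addRight 1) g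
  rw [sum_add_distrib, sum_add_distrib, hsub, hadd]
  ring

lemma two_le_window (hdom : ∀ v, g v ≤ 1 → 2 ≤ g (v - 1) + g (v + 1)) (v : Fin n) :
    2 ≤ g (v - 1) + g v + g (v + 1) := by
  by_cases h : g v ≤ 1
  · have := hdom v h
    omega
  · omega

lemma two_mul_le_three_mul_sum (hdom : ∀ v, g v ≤ 1 → 2 ≤ g (v - 1) + g (v + 1)) :
    2 * n ≤ 3 * ∑ v, g v :=
  calc 2 * n = ∑ _v : Fin n, 2 := by simp [mul_comm]
    _ ≤ ∑ v, (g (v - 1) + g v + g (v + 1)) := sum_le_sum fun v _ => two_le_window hdom v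
    _ = 3 * ∑ v, g v := sum_window g

lemma two_mul_add_two_le_three_mul_sum (hdom : ∀ v, g v ≤ 1 → 2 ≤ g (v - 1) + g (v + 1))
    (hn : 3 ≤ n) {p : Fin n} (hp : g p = 1) : 2 * n + 2 ≤ 3 * ∑ v, g v := by
  let e v := g (v - 1) + g v + g (v + 1) - 2
  have hwin : ∀ v, g (v - 1) + g v + g (v + 1) = e v + 2 := fun v =>
    (Nat.sub_add_cancel (two_le_window hdom v)).symm
  have hexcess : 2 ≤ e (p - 1) + e p + e (p + 1) := by
    have h0 := hdom p (by omega)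
    have h1 := hdom (p + 1)
    simp only [e, sub_add_cancel, add_sub_cancel_right] at h1 ⊢
    omega
  have h1 : (1 : Fin n) ≠ 0 := by
    simp [Fin.ext_iff, Nat.mod_eq_of_lt (show 1 < n by omega)]
  have h2 : (2 : Fin n) ≠ 0 := by
    simp [Fin.ext_iff, Nat.mod_eq_of_lt (show 2 < n by omega)]
  have hsum := add_add_le_sum e (a := p - 1) (b := p) (c := p + 1)
    (fun h => h1 (by linear_combination -h)) (fun h => h2 (by linear_combination -h))
    (fun h => h1 (by linear_combination -h))
  calc 2 * n + 2 ≤ ∑ v, e v + 2 * n := by omega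
    _ = ∑ v, (g (v - 1) + g v + g (v + 1)) := by simp [hwin, sum_add_distrib, mul_comm]
    _ = 3 * ∑ v, g v := sum_window g

lemma two_mul_div_three_le_sum (hdom : ∀ v, g v ≤ 1 → 2 ≤ g (v - 1) + g (v + 1))
    (hn : 3 ≤ n) (hle : ∀ v, g v ≤ 2) : 2 * ((n + 2) / 3) ≤ ∑ v, g v := by
  have hlow := two_mul_le_three_mul_sum hdom
  by_cases hone : ∃ p, g p = 1
  · obtain ⟨p, hp⟩ := hone
    have := two_mul_add_two_le_three_mul_sum hdom hn hp
    omega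
  · simp only [not_exists] at hone
    have heven : 2 ∣ ∑ v, g v := dvd_sum fun v _ => by
      have := hle v
      have := hone v
      omega
    omega

end Cycle

theorem gammaW220_cycle_path (n : ℕ) (hn : 3 ≤ n) :
    gammaW (SimpleGraph.pathGraph n) ![2,2,0] = 2 * ((n + 2) / 3) ∧
    gammaW (SimpleGraph.cycleGraph n) ![2,2,0] = 2 * ((n + 2) / 3) := by
  obtain ⟨m, rfl⟩ : ∃ m, n = m + 3 := ⟨n - 3, by omega⟩
  obtain ⟨S, hcard, hS⟩ := exists_dominating_pathGraph (m + 3)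
  obtain ⟨f, hf, hsum⟩ := exists_wdom_two_two_zero hS
  rw [hcard] at hsum
  have hlower : ∀ f' : Fin (m + 3) → Fin 3, WDom (cycleGraph (m + 3)) ![2, 2, 0] f' →
      2 * ((m + 3 + 2) / 3) ≤ ∑ v, (f' v : ℕ) := fun f' hf' =>
    two_mul_div_three_le_sum (fun _ hv => two_le_add_of_wdom_cycleGraph hf' hv) hn
      fun v => (f' v).is_le
  exact ⟨gammaW_eq hf hsum fun f' hf' => hlower f' (hf'.mono pathGraph_le_cycleGraph),
    gammaW_eq (hf.mono pathGraph_le_cycleGraph) hsum hlower⟩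
end

section
/- For any integer n ≥ 3, γ_{(2,2,2,0)}(C_n) = n, and γ_{(2,2,2,0)}(P_n) = n for all n ≥ 3 except n = 5, where γ_{(2,2,2,0)}(P_5) = 6. -/
open scoped Classical
open Finset SimpleGraph

/-
Let `T` be the set of vertices of value 3. Capping every value at 2 keeps every
vertex outside `T` dominated, since one neighbour of value at least 2 already suffices. Summing
the capped values over all neighbourhoods of a graph of maximum degree at most 2 therefore gives
`2 (|V| - |T|) ≤ 2 (w(f) - |T|)`, that is `w(f) ≥ |V|`. On `C_n` the constant function 1 attains
this bound; on `P_n` it is attained by concatenating blocks `0220` and `030`, which is possible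
for every `n ≥ 3` except `n = 5`. On `P_5` a case check shows that weight 5 is impossible, while
`02220` has weight 6.
-/

lemma vec2220_apply (j : Fin 4) : ![2,2,2,0] j = if j = 3 then 0 else 2 := by
  fin_cases j <;> rfl

lemma gammaW_eq_of_le_weight {V : Type*} [Fintype V] {G : SimpleGraph V} {l : ℕ}
    {w : Fin (l + 1) → ℕ} {N : ℕ} {f : V → Fin (l + 1)} (hf : WDom G w f)
    (hfN : ∑ v, (f v : ℕ) = N) (hmin : ∀ g, WDom G w g → N ≤ ∑ v, (g v : ℕ)) :
    gammaW G w = N :=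
  le_antisymm (Nat.sInf_le ⟨f, hf, hfN⟩)
    (le_csInf ⟨N, f, hf, hfN⟩ fun _ ⟨g, hg, hs⟩ => hs ▸ hmin g hg)

lemma two_le_sum_min_two {ι : Type*} {s : Finset ι} {a : ι → ℕ}
    (h : 2 ≤ ∑ i ∈ s, a i) : 2 ≤ ∑ i ∈ s, min (a i) 2 :=
  (le_min h le_rfl).trans <|
    le_sum_of_subadditive (fun x => min x 2) (by simp) (fun x y => by omega) s a

lemma Function.Periodic.sum_range_mul {M : Type*} [AddCommMonoid M] {p : ℕ → M} {k : ℕ}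
    (hp : Function.Periodic p k) (m : ℕ) :
    ∑ i ∈ range (m * k), p i = m • ∑ i ∈ range k, p i := by
  induction m with
  | zero => simp
  | succ m ih =>
    rw [add_mul, one_mul, sum_range_add, ih, succ_nsmul]
    congr 1
    exact sum_congr rfl fun x _ => by rw [add_comm]; exact (hp.nat_mul m) x

section

variable {V : Type*} [Fintype V]

lemma sum_adj_eq_sum_neighborFinset (G : SimpleGraph V) (g : V → ℕ) (v : V) :
    (∑ u, if G.Adj v u then g u else 0) = ∑ u ∈ G.neighborFinset v, g u := by
  rw [neighborFinset_eq_filter, sum_filter]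

lemma sum_sum_neighborFinset (G : SimpleGraph V) (g : V → ℕ) :
    ∑ v, ∑ u ∈ G.neighborFinset v, g u = ∑ u, G.degree u * g u := by
  simp_rw [neighborFinset_eq_filter, sum_filter]
  rw [sum_comm]
  refine sum_congr rfl fun u _ => ?_
  rw [← sum_filter]
  simp [G.adj_comm, ← card_neighborFinset_eq_degree, neighborFinset_eq_filter]

theorem card_le_weight_of_degree_le_two {G : SimpleGraph V} (hG : ∀ v, G.degree v ≤ 2)
    {f : V → Fin 4} (hf : WDom G ![2,2,2,0] f) : Fintype.card V ≤ ∑ v, (f v : ℕ) := by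
  set three : V → ℕ := fun v => if f v = 3 then 1 else 0
  set cap : V → ℕ := fun v => min (f v : ℕ) 2
  have hdom : ∀ v, 2 - 2 * three v ≤ ∑ u ∈ G.neighborFinset v, cap u := by
    intro v
    by_cases hv : f v = 3
    · simp [three, hv]
    · have := hf v
      rw [vec2220_apply, if_neg hv, sum_adj_eq_sum_neighborFinset] at this
      simpa [three, hv] using two_le_sum_min_two this
  have hsplit : ∀ v, (f v : ℕ) = cap v + three v := by
    intro v
    have := (f v).isLt
    by_cases hv : f v = 3
    · simp [three, cap, hv]
    · have : (f v : ℕ) ≠ 3 := fun h => hv (Fin.ext h)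
      simp only [three, cap, hv, if_false]
      omega
  have key : 2 * Fintype.card V ≤ 2 * ∑ v, (f v : ℕ) :=
    calc 2 * Fintype.card V = ∑ _v : V, 2 := by simp [mul_comm]
      _ = ∑ v, ((2 - 2 * three v) + 2 * three v) :=
          sum_congr rfl fun v _ => by simp only [three]; split_ifs <;> rfl
      _ = ∑ v, (2 - 2 * three v) + 2 * ∑ v, three v := by rw [sum_add_distrib, mul_sum]
      _ ≤ ∑ v, ∑ u ∈ G.neighborFinset v, cap u + 2 * ∑ v, three v := by
          gcongr with v; exact hdom v
      _ = ∑ u, G.degree u * cap u + 2 * ∑ v, three v := by rw [sum_sum_neighborFinset]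
      _ ≤ ∑ u, 2 * cap u + 2 * ∑ v, three v := by gcongr with u; exact hG u
      _ = 2 * ∑ v, (f v : ℕ) := by simp_rw [hsplit, sum_add_distrib, mul_add, mul_sum]
  omega

lemma wdom_one_of_two_le_degree {G : SimpleGraph V} (hG : ∀ v, 2 ≤ G.degree v) :
    WDom G ![2,2,2,0] (fun _ => 1) := by
  intro v
  rw [sum_adj_eq_sum_neighborFinset]
  simpa using hG v

end

lemma cycleGraph_degree_le_two {n : ℕ} (v : Fin (n + 2)) :
    (cycleGraph (n + 2)).degree v ≤ 2 := by
  rw [cycleGraph_degree_two_le]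
  exact card_le_two

lemma pathGraph_degree_le_two {n : ℕ} (v : Fin n) : (pathGraph n).degree v ≤ 2 := by
  rcases n with _ | _ | n
  · exact v.elim0
  · exact (degree_lt_card_verts v).le.trans (by simp)
  · exact (degree_le_of_le pathGraph_le_cycleGraph).trans (cycleGraph_degree_le_two v)

theorem gammaW_cycleGraph (n : ℕ) : gammaW (cycleGraph (n + 3)) ![2,2,2,0] = n + 3 :=
  gammaW_eq_of_le_weight
    (wdom_one_of_two_le_degree fun v => by
      convert Nat.le_of_eq (cycleGraph_degree_three_le (v := v)).symm)
    (by simp)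
    (fun g hg => by
      simpa using
        card_le_weight_of_degree_le_two (fun v => by convert cycleGraph_degree_le_two v) hg)

lemma le_weight_pathGraph {n : ℕ} {f : Fin n → Fin 4} (hf : WDom (pathGraph n) ![2,2,2,0] f) :
    n ≤ ∑ v, (f v : ℕ) := by
  simpa using card_le_weight_of_degree_le_two pathGraph_degree_le_two hf

lemma sum_adj_pathGraph {n : ℕ} (a : ℕ → ℕ) (v : Fin n) :
    (∑ u, if (pathGraph n).Adj v u then a u else 0) =
      (if (v : ℕ) = 0 then 0 else a (v - 1)) + (if (v : ℕ) + 1 < n then a (v + 1) else 0) := by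
  have hsplit : ∀ i : ℕ, (if (v : ℕ) + 1 = i ∨ i + 1 = v then a i else 0) =
      (if i + 1 = v then a i else 0) + (if i = v + 1 then a i else 0) := by
    intro i; split_ifs <;> omega
  simp only [pathGraph_adj]
  rw [Fin.sum_univ_eq_sum_range (fun i => if (v : ℕ) + 1 = i ∨ i + 1 = v then a i else 0),
    sum_congr rfl fun i _ => hsplit i, sum_add_distrib, sum_ite_eq']
  simp only [mem_range]
  congr 1
  by_cases hv : (v : ℕ) = 0
  · simp [hv]
  · obtain ⟨k, hk⟩ := Nat.exists_eq_add_one.mpr (Nat.pos_of_ne_zero hv)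
    have : k < n := by omega
    simp [hk, this]

lemma wdom_pathGraph_of {n : ℕ} (a : ℕ → ℕ) (ha : ∀ i, a i < 4)
    (hdom : ∀ i < n, a i ≠ 3 →
      2 ≤ (if i = 0 then 0 else a (i - 1)) + (if i + 1 < n then a (i + 1) else 0)) :
    WDom (pathGraph n) ![2,2,2,0] (fun v => ⟨a v, ha v⟩) := by
  intro v
  rw [sum_adj_pathGraph a v, vec2220_apply]
  by_cases hv : (⟨a v, ha v⟩ : Fin 4) = 3
  · rw [if_pos hv]
    exact Nat.zero_le _
  · rw [if_neg hv]
    exact hdom v v.isLt fun h => hv (Fin.ext h)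

def pathPattern (b i : ℕ) : ℕ :=
  if i < 4 * b then (if i % 4 = 1 ∨ i % 4 = 2 then 2 else 0)
  else if (i - 4 * b) % 3 = 1 then 3 else 0

lemma pathPattern_lt_four (b i : ℕ) : pathPattern b i < 4 := by
  unfold pathPattern; split_ifs <;> omega

lemma pathPattern_dom {b c i : ℕ} (hi : i < 4 * b + 3 * c) (h3 : pathPattern b i ≠ 3) :
    2 ≤ (if i = 0 then 0 else pathPattern b (i - 1)) +
      (if i + 1 < 4 * b + 3 * c then pathPattern b (i + 1) else 0) := by
  unfold pathPattern at h3 ⊢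
  split_ifs at h3 ⊢ <;> omega

lemma sum_range_pathPattern (b c : ℕ) :
    ∑ i ∈ range (4 * b + 3 * c), pathPattern b i = 4 * b + 3 * c := by
  have h4 : Function.Periodic (fun i => if i % 4 = 1 ∨ i % 4 = 2 then 2 else 0) 4 := fun i => by
    simp
  have h3 : Function.Periodic (fun i => if i % 3 = 1 then 3 else 0) 3 := fun i => by
    simp
  have h4sum : ∑ i ∈ range 4, (if i % 4 = 1 ∨ i % 4 = 2 then 2 else 0) = 4 := by decide
  have h3sum : ∑ i ∈ range 3, (if i % 3 = 1 then 3 else 0) = 3 := by decide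
  calc ∑ i ∈ range (4 * b + 3 * c), pathPattern b i
      = ∑ i ∈ range (b * 4), (if i % 4 = 1 ∨ i % 4 = 2 then 2 else 0) +
          ∑ i ∈ range (c * 3), (if i % 3 = 1 then 3 else 0) := by
        rw [sum_range_add, mul_comm 4, mul_comm 3]
        congr 1 <;> refine sum_congr rfl fun i hi => ?_ <;> rw [mem_range] at hi <;>
          simp only [pathPattern] <;> split_ifs <;> omega
    _ = 4 * b + 3 * c := by
        rw [h4.sum_range_mul, h3.sum_range_mul, h4sum, h3sum, smul_eq_mul, smul_eq_mul]; ring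

lemma exists_eq_four_mul_add_three_mul {n : ℕ} (hn : 3 ≤ n) (h5 : n ≠ 5) :
    ∃ b c, n = 4 * b + 3 * c := by
  obtain h | h | h : n % 3 = 0 ∨ n % 3 = 1 ∨ n % 3 = 2 := by omega
  · exact ⟨0, n / 3, by omega⟩
  · exact ⟨1, (n - 4) / 3, by omega⟩
  · exact ⟨2, (n - 8) / 3, by omega⟩

theorem gammaW_pathGraph {n : ℕ} (hn : 3 ≤ n) (h5 : n ≠ 5) :
    gammaW (pathGraph n) ![2,2,2,0] = n := by
  obtain ⟨b, c, rfl⟩ := exists_eq_four_mul_add_three_mul hn h5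
  refine gammaW_eq_of_le_weight
    (wdom_pathGraph_of (pathPattern b) (pathPattern_lt_four b) fun i hi h3 => pathPattern_dom hi h3)
    ?_ fun g hg => le_weight_pathGraph hg
  rw [Fin.sum_univ_eq_sum_range (pathPattern b), sum_range_pathPattern]

lemma six_le_weight_pathGraph_five {f : Fin 5 → Fin 4} (hf : WDom (pathGraph 5) ![2,2,2,0] f) :
    6 ≤ ∑ v, (f v : ℕ) := by
  have h0 := hf 0
  have h1 := hf 1
  have h2 := hf 2
  have h3 := hf 3
  have h4 := hf 4
  simp +decide only [vec2220_apply, Fin.sum_univ_five, pathGraph_adj, ↓reduceIte, add_zero,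
    zero_add] at h0 h1 h2 h3 h4
  rw [Fin.sum_univ_five]
  split_ifs at h0 h1 h2 h3 h4 <;> omega

theorem gammaW_pathGraph_five : gammaW (pathGraph 5) ![2,2,2,0] = 6 := by
  let a : ℕ → ℕ := fun i => if i = 1 ∨ i = 2 ∨ i = 3 then 2 else 0
  have ha : ∀ i, a i < 4 := fun i => by simp only [a]; split_ifs <;> omega
  refine gammaW_eq_of_le_weight (wdom_pathGraph_of a ha fun i hi _ => ?_) ?_
    fun g hg => six_le_weight_pathGraph_five hg
  · simp only [a]; split_ifs <;> omega
  · rw [Fin.sum_univ_eq_sum_range a]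
    decide

theorem gammaW2220_cycle_path (n : ℕ) (hn : 3 ≤ n) :
    gammaW (SimpleGraph.cycleGraph n) ![2,2,2,0] = n ∧
    gammaW (SimpleGraph.pathGraph n) ![2,2,2,0] = (if n = 5 then 6 else n) := by
  refine ⟨?_, ?_⟩
  · obtain ⟨m, rfl⟩ : ∃ m, n = m + 3 := ⟨n - 3, by omega⟩
    exact gammaW_cycleGraph m
  · split_ifs with h5
    · exact h5 ▸ gammaW_pathGraph_five
    · exact gammaW_pathGraph hn h5
end
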